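/- arXiv:2310.03313 — 4 statements merged into one kernel-verified Lean document; each statement's English description precedes it below -/
import Mathlib

section
/- Let u = (u_0,…,u_r) and v = (v_0,…,v_r) be exponent vectors in ℕ^{r+1}, and for 1 ≤ j ≤ r set c_j := Σ_{k=j}^{r} (v_k − u_k) ∈ ℤ. If Σ_{k=0}^{r} u_k = Σ_{k=0}^{r} v_k and 0 ≤ c_j ≤ v_j for all 1 ≤ j ≤ r, then the coefficient of t^u in σ_ω(t^v) equals ∏_{j=1}^{r} C(v_j, c_j)·ω^{c_j}, where C(·,·) denotes the binomial coefficient; otherwise the coefficient of t^u in σ_ω(t^v) is 0. -/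
/-!
By the binomial theorem, `σ_ω(t^v) = t_0^{v_0} ∏_{i ≥ 1} (t_i + ω t_{i-1})^{v_i}` is the sum over
`b` with `b_0 = 0` and `0 ≤ b_i ≤ v_i` of `∏ C(v_i, b_i) ω^{b_i} · t^{e(b)}`, where
`e(b)_j = v_j - b_j + b_{j+1}`. The tail sums `∑_{k ≥ j} (v_k - e(b)_k)` telescope to `b_j`, and a
function is determined by its tail sums, so `t^u` occurs only for `b = c`, and it occurs exactly
when `c` is such an admissible `b`, which is the stated condition.
-/

open MvPolynomial Finset

/-- The `R`-algebra endomorphism `σ_ω` of `R[t_0, …, t_r]` determined by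
`σ_ω(t_0) = t_0` and `σ_ω(t_i) = t_i + ω·t_{i-1}` for `1 ≤ i ≤ r`. -/
noncomputable def sigmaOmega {R : Type*} [CommRing R] {r : ℕ} (ω : R) :
    MvPolynomial (Fin (r + 1)) R →ₐ[R] MvPolynomial (Fin (r + 1)) R :=
  aeval fun i : Fin (r + 1) =>
    if i.1 = 0 then X i
    else X i + C ω * X ⟨i.1 - 1, lt_of_le_of_lt (Nat.sub_le _ _) i.isLt⟩

theorem eq_of_forall_sum_Ici_eq {ι M : Type*} [LinearOrder ι] [LocallyFiniteOrderTop ι]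
    [AddCancelCommMonoid M] {x y : ι → M}
    (h : ∀ j, ∑ k ∈ Ici j, x k = ∑ k ∈ Ici j, y k) : x = y := by
  funext j
  by_contra hj
  classical
  -- at the largest index `≥ j` where `x` and `y` differ, their tail sums would differ
  set s := (Ici j).filter fun k => x k ≠ y k
  have hs : s.Nonempty := ⟨j, by simp [s, hj]⟩
  obtain ⟨hk, hxy⟩ := mem_filter.1 (s.max'_mem hs)
  have htail : ∑ i ∈ Ioi (s.max' hs), x i = ∑ i ∈ Ioi (s.max' hs), y i := by
    refine sum_congr rfl fun i hi => ?_
    by_contra hne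
    have hji : j ≤ i := (mem_Ici.1 hk).trans (mem_Ioi.1 hi).le
    exact (mem_Ioi.1 hi).not_ge (s.le_max' i (mem_filter.2 ⟨mem_Ici.2 hji, hne⟩))
  have hmax := h (s.max' hs)
  rw [Ici_eq_cons_Ioi, sum_cons, sum_cons, htail] at hmax
  exact hxy (add_right_cancel hmax)

theorem monomial_one_eq_prod_X_pow {σ S : Type*} [CommSemiring S] [Fintype σ] (v : σ →₀ ℕ) :
    (monomial v 1 : MvPolynomial σ S) = ∏ i, X i ^ v i := by
  simp_rw [X_pow_eq_monomial, ← monomial_sum_one, Finsupp.univ_sum_single]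

section

variable {R : Type*} [CommRing R] {r : ℕ}

def finPrev (i : Fin (r + 1)) : Fin (r + 1) :=
  ⟨i.1 - 1, lt_of_le_of_lt (Nat.sub_le _ _) i.isLt⟩

/-- The possible numbers of factors `t_i` of `t_i ^ n` that `σ_ω` turns into `ω t_{i-1}`. -/
def shiftRange (i : Fin (r + 1)) (n : ℕ) : Finset ℕ :=
  if i.1 = 0 then {0} else range (n + 1)

theorem sigmaOmega_X_pow (ω : R) (i : Fin (r + 1)) (n : ℕ) :
    sigmaOmega ω (X i ^ n) = ∑ a ∈ shiftRange i n,
      monomial (Finsupp.single i (n - a) + Finsupp.single (finPrev i) a)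
        ((n.choose a : R) * ω ^ a) := by
  rw [map_pow, sigmaOmega, aeval_X, shiftRange]
  split_ifs with hi
  · simp [X_pow_eq_monomial]
  · rw [add_comm (X i), add_pow]
    refine sum_congr rfl fun a _ => ?_
    rw [mul_pow, ← map_pow, X_pow_eq_monomial, X_pow_eq_monomial, C_mul_monomial,
      monomial_mul, ← C_eq_coe_nat, mul_comm, C_mul_monomial, mul_one, mul_one,
      add_comm (Finsupp.single _ a)]
    rfl

/-- The exponent of the term of `σ_ω(t^v)` in which `b i` of the factors `t_i` have become
`ω t_{i-1}`. -/
noncomputable def shiftExp (v : Fin (r + 1) →₀ ℕ) (b : Fin (r + 1) → ℕ) : Fin (r + 1) →₀ ℕ :=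
  ∑ i, (Finsupp.single i (v i - b i) + Finsupp.single (finPrev i) (b i))

def shifts (v : Fin (r + 1) →₀ ℕ) : Finset (Fin (r + 1) → ℕ) :=
  Fintype.piFinset fun i => shiftRange i (v i)

theorem mem_shifts {v : Fin (r + 1) →₀ ℕ} {b : Fin (r + 1) → ℕ} :
    b ∈ shifts v ↔ ∀ i, (i.1 = 0 → b i = 0) ∧ b i ≤ v i := by
  refine Fintype.mem_piFinset.trans (forall_congr' fun i => ?_)
  rw [shiftRange]
  split_ifs <;> grind

theorem sigmaOmega_monomial (ω : R) (v : Fin (r + 1) →₀ ℕ) :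
    sigmaOmega ω (monomial v 1) =
      ∑ b ∈ shifts v, monomial (shiftExp v b) (∏ i, ((v i).choose (b i) : R) * ω ^ b i) := by
  simp_rw [monomial_one_eq_prod_X_pow, map_prod, sigmaOmega_X_pow, prod_univ_sum, shifts,
    shiftExp, monomial_sum_prod]

def tailDiff (u v : Fin (r + 1) →₀ ℕ) (j : Fin (r + 1)) : ℤ :=
  ∑ k ∈ Ici j, ((v k : ℤ) - u k)

theorem tailDiff_injective (v : Fin (r + 1) →₀ ℕ) : Function.Injective (tailDiff · v) := by
  intro u u' h
  have := eq_of_forall_sum_Ici_eq (congrFun h)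
  ext k
  simpa using congrFun this k

theorem tailDiff_zero (u v : Fin (r + 1) →₀ ℕ) :
    tailDiff u v 0 = ((∑ k, v k : ℕ) : ℤ) - ((∑ k, u k : ℕ) : ℤ) := by
  rw [tailDiff, ← bot_eq_zero, Ici_bot, sum_sub_distrib, Nat.cast_sum, Nat.cast_sum]

theorem tailDiff_shiftExp {v : Fin (r + 1) →₀ ℕ} {b : Fin (r + 1) → ℕ} (hb : b ∈ shifts v)
    (j : Fin (r + 1)) : tailDiff (shiftExp v b) v j = b j := by
  have hE : ∑ k ∈ Ici j, (shiftExp v b k : ℤ) =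
      ∑ i, ((if j ≤ i then (v i - b i : ℤ) else 0) + if j ≤ finPrev i then (b i : ℤ) else 0) := by
    simp_rw [shiftExp, Finsupp.finsetSum_apply, Finsupp.add_apply, Nat.cast_sum, Nat.cast_add]
    rw [sum_comm]
    refine sum_congr rfl fun i _ => ?_
    simp only [Finsupp.single_apply, Nat.cast_ite, Nat.cast_sub (mem_shifts.1 hb i).2,
      Nat.cast_zero, sum_add_distrib]
    simp
  have hv : ∑ k ∈ Ici j, (v k : ℤ) = ∑ i, if j ≤ i then (v i : ℤ) else 0 := by
    rw [← sum_filter, filter_le_eq_Ici]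
  rw [tailDiff, sum_sub_distrib, hv, hE, ← sum_sub_distrib]
  calc _ = ∑ i, if j = i then (b i : ℤ) else 0 := by
        refine sum_congr rfl fun i _ => ?_
        have hb0 := (mem_shifts.1 hb i).1
        simp only [Fin.le_def, Fin.ext_iff, finPrev]
        split_ifs <;> omega
    _ = _ := by simp

theorem shiftExp_eq_iff {u v : Fin (r + 1) →₀ ℕ} {b : Fin (r + 1) → ℕ} (hb : b ∈ shifts v) :
    shiftExp v b = u ↔ ∀ j, tailDiff u v j = b j := by
  refine ⟨fun h => h ▸ tailDiff_shiftExp hb, fun h => tailDiff_injective v ?_⟩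
  exact funext fun j => (tailDiff_shiftExp hb j).trans (h j).symm

theorem coeff_sigmaOmega_monomial (ω : R) (u v : Fin (r + 1) →₀ ℕ) :
    coeff u (sigmaOmega ω (monomial v 1)) = ∑ b ∈ shifts v,
      if ∀ j, tailDiff u v j = b j then ∏ i, ((v i).choose (b i) : R) * ω ^ b i else 0 := by
  rw [sigmaOmega_monomial, coeff_sum]
  refine sum_congr rfl fun b hb => ?_
  simp only [coeff_monomial, shiftExp_eq_iff hb]

theorem exists_mem_shifts_tailDiff_eq_iff (u v : Fin (r + 1) →₀ ℕ) :
    (∃ b ∈ shifts v, ∀ j, tailDiff u v j = b j) ↔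
      (∑ k, u k) = (∑ k, v k) ∧
        ∀ j : Fin (r + 1), 1 ≤ j.1 → 0 ≤ tailDiff u v j ∧ tailDiff u v j ≤ v j := by
  constructor
  · rintro ⟨b, hb, hcb⟩
    refine ⟨?_, fun j _ => ?_⟩
    · have h0 := hcb 0
      rw [tailDiff_zero, (mem_shifts.1 hb 0).1 rfl] at h0
      omega
    · rw [hcb j]
      exact ⟨Nat.cast_nonneg _, Nat.cast_le.2 (mem_shifts.1 hb j).2⟩
  · rintro ⟨hsum, hbound⟩
    have hzero : ∀ j : Fin (r + 1), j.1 = 0 → tailDiff u v j = 0 := fun j hj => by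
      rw [show j = 0 from Fin.ext hj, tailDiff_zero, hsum, sub_self]
    have hnonneg : ∀ j, 0 ≤ tailDiff u v j := fun j => by
      by_cases hj : j.1 = 0
      · exact (hzero j hj).ge
      · exact (hbound j (by omega)).1
    refine ⟨fun j => (tailDiff u v j).toNat, mem_shifts.2 fun i => ⟨fun hi => ?_, ?_⟩,
      fun j => (Int.toNat_of_nonneg (hnonneg j)).symm⟩
    · simp [hzero i hi]
    · by_cases hi : i.1 = 0
      · simp [hzero i hi]
      · exact Int.toNat_le.2 (hbound i (by omega)).2

end

theorem stmt0_general {R : Type*} [CommRing R] (r : ℕ) (ω : R)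
    (u v : Fin (r + 1) →₀ ℕ) (c : Fin (r + 1) → ℤ)
    (hc : ∀ j : Fin (r + 1), c j =
      ∑ k ∈ Finset.univ.filter (fun k : Fin (r + 1) => j ≤ k),
        ((v k : ℤ) - (u k : ℤ))) :
    (((∑ k, u k) = (∑ k, v k) ∧
        ∀ j : Fin (r + 1), 1 ≤ j.1 → 0 ≤ c j ∧ c j ≤ (v j : ℤ)) →
      MvPolynomial.coeff u (sigmaOmega ω (MvPolynomial.monomial v (1 : R))) =
        ∏ j ∈ Finset.univ.filter (fun j : Fin (r + 1) => 1 ≤ j.1),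
          (Nat.choose (v j) (c j).toNat : R) * ω ^ (c j).toNat) ∧
    ((¬ ((∑ k, u k) = (∑ k, v k) ∧
        ∀ j : Fin (r + 1), 1 ≤ j.1 → 0 ≤ c j ∧ c j ≤ (v j : ℤ))) →
      MvPolynomial.coeff u (sigmaOmega ω (MvPolynomial.monomial v (1 : R))) = 0) := by
  obtain rfl : c = tailDiff u v := funext fun j => by rw [hc, filter_le_eq_Ici, tailDiff]
  rw [coeff_sigmaOmega_monomial, ← exists_mem_shifts_tailDiff_eq_iff]
  refine ⟨fun ⟨b, hb, hcb⟩ => ?_,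
    fun hnone => sum_eq_zero fun b hb => if_neg fun hcb => hnone ⟨b, hb, hcb⟩⟩
  have hunique : ∀ b', (∀ j, tailDiff u v j = b' j) → b' = b := fun b' h =>
    funext fun j => Nat.cast_injective ((h j).symm.trans (hcb j))
  rw [sum_eq_single_of_mem b hb fun b' _ hne => if_neg (hne ∘ hunique b'), if_pos hcb]
  simp_rw [hcb, Int.toNat_natCast]
  refine (prod_filter_of_ne fun i _ hne => ?_).symm
  by_contra hi
  simp [(mem_shifts.1 hb i).1 (by omega)] at hne

theorem stmt0 {R : Type*} [CommRing R] (r : ℕ) (hr : 1 ≤ r) (ω : R)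
    (u v : Fin (r + 1) →₀ ℕ) (c : Fin (r + 1) → ℤ)
    (hc : ∀ j : Fin (r + 1), c j =
      ∑ k ∈ Finset.univ.filter (fun k : Fin (r + 1) => j ≤ k),
        ((v k : ℤ) - (u k : ℤ))) :
    (((∑ k, u k) = (∑ k, v k) ∧
        ∀ j : Fin (r + 1), 1 ≤ j.1 → 0 ≤ c j ∧ c j ≤ (v j : ℤ)) →
      MvPolynomial.coeff u (sigmaOmega ω (MvPolynomial.monomial v (1 : R))) =
        ∏ j ∈ Finset.univ.filter (fun j : Fin (r + 1) => 1 ≤ j.1),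
          (Nat.choose (v j) (c j).toNat : R) * ω ^ (c j).toNat) ∧
    ((¬ ((∑ k, u k) = (∑ k, v k) ∧
        ∀ j : Fin (r + 1), 1 ≤ j.1 → 0 ≤ c j ∧ c j ≤ (v j : ℤ))) →
      MvPolynomial.coeff u (sigmaOmega ω (MvPolynomial.monomial v (1 : R))) = 0) :=
  stmt0_general r ω u v c hc
end

section
/- For every polynomial F ∈ R[t_0,…,t_r], every integer d ≥ 1, and every index 0 ≤ i ≤ r−2, setting u := e_i + (d−1)·e_r, the coefficient of t^u in σ_ω(F) equals [t^u]F + ω·[t^{u + e_{i+1} − e_i}]F. -/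
/-!
Substitute `t_z ↦ b` and `t_j ↦ c_j a` for `j ≠ z` into a polynomial `P` in two new variables
`a`, `b`. A monomial `t^w` goes to a scalar times `a^(∑_{j ≠ z} w_j) b^(w_z)`, so the coefficient
of `a b^n` is `∑_{j ≠ z} c_j [t_j t_z^n] P`. Take `z = r` and `c = δ_i`. Composing the substitution
with `σ_ω` gives the substitution with `c = δ_i + ω δ_{i+1}`: `σ_ω(t_{i+1})` gains the term `ω t_i`,
and the extra term `ω t_{r-1}` of `σ_ω(t_r)` is sent to `0` because `i + 1 < r`.
Comparing the two coefficients of `a b^(d-1)` gives the identity.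
-/

open MvPolynomial Finset

section TwoVarSubst

variable {R ι : Type*} [CommSemiring R] [DecidableEq ι]

noncomputable def twoVarSubst (z : ι) (c : ι → R) :
    MvPolynomial ι R →ₐ[R] MvPolynomial (Fin 2) R :=
  aeval fun j => if j = z then X 1 else C (c j) * X 0

lemma twoVarSubst_monomial (z : ι) (c : ι → R) (w : ι →₀ ℕ) (a : R) :
    twoVarSubst z c (monomial w a) =
      monomial (Finsupp.single 0 (w.erase z).degree + Finsupp.single 1 (w z))
        (a * (w.erase z).prod fun j k => c j ^ k) := by
  rw [twoVarSubst, aeval_monomial, ← Finsupp.mul_prod_erase' w z _ (fun _ => pow_zero _),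
    if_pos rfl]
  have hrest : ((w.erase z).prod fun j k => (if j = z then X 1 else C (c j) * X 0) ^ k) =
      ((w.erase z).prod fun j k => C (c j ^ k) * (X 0 : MvPolynomial (Fin 2) R) ^ k) :=
    Finsupp.prod_congr fun j hj => by
      rw [if_neg (by simp_all), mul_pow, map_pow]
  rw [hrest, Finsupp.prod_mul, ← map_finsuppProd, Finsupp.prod, Finsupp.prod,
    prod_pow_eq_pow_sum, ← Finsupp.degree_apply]
  simp only [X_pow_eq_monomial, algebraMap_eq, C_mul_monomial, monomial_mul, one_mul, mul_one]
  rw [add_comm]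

lemma coeff_twoVarSubst [Fintype ι] (z : ι) (c : ι → R) (n : ℕ) (P : MvPolynomial ι R) :
    coeff (Finsupp.single 0 1 + Finsupp.single 1 n) (twoVarSubst z c P) =
      ∑ j ∈ univ.erase z, c j * coeff (Finsupp.single j 1 + Finsupp.single z n) P := by
  induction P using MvPolynomial.induction_on' with
  | add p q hp hq => simp only [map_add, coeff_add, hp, hq, mul_add, sum_add_distrib]
  | monomial w a =>
    have hexp : Finsupp.single (0 : Fin 2) (w.erase z).degree + Finsupp.single 1 (w z) =
        Finsupp.single 0 1 + Finsupp.single 1 n ↔ (w.erase z).degree = 1 ∧ w z = n := by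
      simp [Finsupp.ext_iff, Fin.forall_fin_two]
    simp only [twoVarSubst_monomial, coeff_monomial, if_congr hexp rfl rfl]
    by_cases h : (w.erase z).degree = 1 ∧ w z = n
    · obtain ⟨j, hj⟩ := (Finsupp.sum_eq_one_iff _).1 h.1
      have hjz : j ≠ z := by
        rintro rfl
        simpa using DFunLike.congr_fun hj j
      obtain rfl : w = Finsupp.single j 1 + Finsupp.single z n := by
        rw [← Finsupp.erase_add_single z w, hj, h.2]
      rw [if_pos h, sum_eq_single j]
      · simp [hj, mul_comm]
      · intro k _ hkj
        rw [if_neg, mul_zero]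
        intro hk
        simpa [Finsupp.single_apply, hkj, hjz] using DFunLike.congr_fun hk k
      · simp [hjz]
    · rw [if_neg h]
      refine (sum_eq_zero fun j hj => ?_).symm
      rw [if_neg, mul_zero]
      rintro rfl
      simp [(ne_of_mem_erase hj).symm] at h

lemma sum_pi_single_mul_of_mem {M : Type*} [NonUnitalNonAssocSemiring M] {s : Finset ι} {i : ι}
    (hi : i ∈ s) (a : M) (f : ι → M) : ∑ j ∈ s, (Pi.single i a : ι → M) j * f j = a * f i := by
  simp [Pi.single_apply, hi]

end TwoVarSubst

lemma twoVarSubst_comp_sigmaOmega {R : Type*} [CommRing R] {r : ℕ} (ω : R) (i : Fin (r + 1))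
    (hi : i.1 + 2 ≤ r) :
    (twoVarSubst (Fin.last r) (Pi.single i 1)).comp (sigmaOmega ω) =
      twoVarSubst (Fin.last r) (Pi.single i 1 + Pi.single ⟨i.1 + 1, by omega⟩ ω) := by
  refine algHom_ext fun j => ?_
  simp only [AlgHom.comp_apply, sigmaOmega, aeval_X]
  split_ifs <;>
    simp only [twoVarSubst, map_add, map_mul, aeval_X, aeval_C, algebraMap_eq, Pi.add_apply,
      Pi.single_apply, Fin.ext_iff, Fin.val_last] <;>
    split_ifs <;> first | (exfalso; omega) | simp

theorem stmt4 {R : Type*} [CommRing R] (r : ℕ) (hr : 2 ≤ r) (ω : R)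
    (F : MvPolynomial (Fin (r + 1)) R) (d : ℕ)
    (i : Fin (r + 1)) (hi : i.1 ≤ r - 2) :
    MvPolynomial.coeff
        (Finsupp.single i 1 + Finsupp.single (Fin.last r) (d - 1))
        (sigmaOmega ω F) =
      MvPolynomial.coeff
        (Finsupp.single i 1 + Finsupp.single (Fin.last r) (d - 1)) F +
      ω * MvPolynomial.coeff
        (Finsupp.single (⟨i.1 + 1, by omega⟩ : Fin (r + 1)) 1 +
          Finsupp.single (Fin.last r) (d - 1)) F := by
  have key := coeff_twoVarSubst (Fin.last r) (Pi.single i 1) (d - 1) (sigmaOmega ω F)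
  rw [← AlgHom.comp_apply, twoVarSubst_comp_sigmaOmega ω i (by omega), coeff_twoVarSubst] at key
  have hiz : i ∈ univ.erase (Fin.last r) := by
    simp only [mem_erase, mem_univ, and_true, ne_eq, Fin.ext_iff, Fin.val_last]
    omega
  have hyz : (⟨i.1 + 1, by omega⟩ : Fin (r + 1)) ∈ univ.erase (Fin.last r) := by
    simp only [mem_erase, mem_univ, and_true, ne_eq, Fin.ext_iff, Fin.val_last]
    omega
  simpa only [Pi.add_apply, add_mul, sum_add_distrib, sum_pi_single_mul_of_mem hiz,
    sum_pi_single_mul_of_mem hyz, one_mul] using key.symm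
end

section
/- Let d ≥ 2 be an integer, let F_0, F_1, …, F_r ∈ R[t_0,…,t_r] be homogeneous polynomials of degree d all of whose coefficients lie in A, and let G_0, G_1, …, G_r ∈ R[t_0,…,t_r] be homogeneous polynomials of degree d all of whose coefficients lie in B, satisfying the compatibility conditions σ_ω(F_0) = G_0 and σ_ω(F_i) = G_i + ω·G_{i−1} for i = 1, …, r. Then the coefficient of t_r^d in F_i is zero for every 0 ≤ i ≤ r; equivalently, the polynomials F_0, F_1, …, F_r have a common zero at the point (0, 0, …, 0, 1). -/
open MvPolynomial Finset

/-!
Evaluate the compatibility relations, and their first and second partial derivatives, at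
`e_r = (0, …, 0, 1)`. Since `σ_ω` fixes `e_r` and `∂_j ∘ σ_ω = σ_ω ∘ ∂_j + ω · σ_ω ∘ ∂_{j+1}`,
each such functional `L` gives relations `L(F_i) + ω p_i = L(G_i) + ω L(G_{i-1})` with
`L(F_i) ∈ A` and `L(G_i) ∈ B`. Whenever the error terms `p_i` are constants, the hypothesis on `ω`
forces, by induction on `i`, all `L(F_i)` to be constants, with `p_0 = 0` and `p_{i+1} = L(F_i)`.

For `L = ev` this gives `F_i(e_r) = 0` for `i < r`. For `L = ev ∘ ∂_j`, by descending induction on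
`j`, the matrix `∂_j F_i(e_r)` vanishes for `i < j` and is constant, `= ψ`, on the diagonal; by
Euler `ψ = d · F_r(e_r)`. For `L = ev ∘ ∂_j ∂_{r-1}`, Euler's identity `∂_j ∂_r = (d - 1) ∂_j`
at `e_r` makes the error terms constant again, and the resulting relations telescope to
`(r + 1)(d - 1) ψ = 0`. In characteristic zero with `d ≥ 2` this gives `ψ = 0`, so `F_r(e_r) = 0`.
-/

namespace SigmaOmega

theorem pderiv_comm {R σ : Type*} [CommRing R] (i j : σ) (P : MvPolynomial σ R) :
    pderiv i (pderiv j P) = pderiv j (pderiv i P) := by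
  have h : ⁅pderiv i, pderiv j⁆ = (0 : Derivation R (MvPolynomial σ R) (MvPolynomial σ R)) :=
    derivation_ext fun k => by
      classical
      rw [Derivation.commutator_apply]
      simp [pderiv_X, Pi.single_apply, apply_ite]
  have hP := congr($h P)
  rwa [Derivation.commutator_apply, Derivation.zero_apply, sub_eq_zero] at hP

theorem coeff_pderiv_mem {K R σ : Type*} [CommSemiring K] [CommRing R] [Algebra K R]
    {S : Subalgebra K R} {P : MvPolynomial σ R} (hP : ∀ m, coeff m P ∈ S) (i : σ)
    (m : σ →₀ ℕ) : coeff m (pderiv i P) ∈ S := by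
  classical
  rw [coeff_pderiv]
  exact mul_mem (hP _) (add_mem (natCast_mem S _) (one_mem S))

theorem eq_zero_of_natCast_mul_eq_zero (K : Type*) {R : Type*} [Field K] [CharZero K] [Ring R]
    [Algebra K R] {n : ℕ} (hn : n ≠ 0) {x : R} (h : (n : R) * x = 0) : x = 0 := by
  have hu : IsUnit (n : R) := by
    simpa using (IsUnit.mk0 (n : K) (Nat.cast_ne_zero.mpr hn)).map (algebraMap K R)
  exact hu.mul_right_eq_zero.mp h

section NonCoboundary

variable {K R : Type*} [CommRing K] [CommRing R] [Algebra K R]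

/-- Think of `A` and `B` as the functions on the two opens of a cover and of `R` as the functions
on their intersection: global functions are constant, and no nonzero multiple of the cocycle `ω`
is a coboundary. -/
structure IsNonCoboundary (A B : Subalgebra K R) (ω : R) : Prop where
  inf_eq_bot : A ⊓ B = ⊥
  eq_zero_of_add_smul_mem : ∀ f ∈ A, ∀ c : K, f + c • ω ∈ B → c = 0

namespace IsNonCoboundary

variable {A B : Subalgebra K R} {ω : R}

theorem eq_of_add_mul_eq (h : IsNonCoboundary A B ω) {x y p q : R} (hx : x ∈ A) (hy : y ∈ B)
    (hp : p ∈ (⊥ : Subalgebra K R)) (hq : q ∈ (⊥ : Subalgebra K R))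
    (hxy : x + ω * p = y + ω * q) : p = q ∧ x = y ∧ x ∈ (⊥ : Subalgebra K R) := by
  obtain ⟨c, rfl⟩ := Algebra.mem_bot.mp hp
  obtain ⟨c', rfl⟩ := Algebra.mem_bot.mp hq
  have hc : c - c' = 0 := h.eq_zero_of_add_smul_mem x hx (c - c') <| by
    convert hy using 1
    rw [Algebra.smul_def, map_sub]
    linear_combination hxy
  obtain rfl : c = c' := sub_eq_zero.mp hc
  have hxy : x = y := add_right_cancel hxy
  refine ⟨rfl, hxy, ?_⟩
  rw [← h.inf_eq_bot]
  exact ⟨hx, hxy ▸ hy⟩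

theorem chain (h : IsNonCoboundary A B ω) {x y p : ℕ → R} {N : ℕ}
    (hx : ∀ i ≤ N, x i ∈ A) (hy : ∀ i ≤ N, y i ∈ B) (hp : ∀ i ≤ N, p i ∈ (⊥ : Subalgebra K R))
    (h0 : x 0 + ω * p 0 = y 0)
    (hsucc : ∀ i < N, x (i + 1) + ω * p (i + 1) = y (i + 1) + ω * y i) :
    (∀ i ≤ N, x i ∈ (⊥ : Subalgebra K R)) ∧ p 0 = 0 ∧ ∀ i < N, p (i + 1) = x i := by
  have hzero := h.eq_of_add_mul_eq (hx 0 N.zero_le) (hy 0 N.zero_le) (hp 0 N.zero_le)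
    (zero_mem _) (by rwa [mul_zero, add_zero])
  have hstep : ∀ i < N, x i = y i → x i ∈ (⊥ : Subalgebra K R) →
      p (i + 1) = y i ∧ x (i + 1) = y (i + 1) ∧ x (i + 1) ∈ (⊥ : Subalgebra K R) :=
    fun i hi hxy hmem => h.eq_of_add_mul_eq (hx _ hi) (hy _ hi) (hp _ hi) (hxy ▸ hmem) (hsucc i hi)
  have hdiag : ∀ i ≤ N, x i = y i ∧ x i ∈ (⊥ : Subalgebra K R) := by
    intro i hi
    induction i with
    | zero => exact hzero.2
    | succ i ih =>
      obtain ⟨hxy, hmem⟩ := ih (by omega)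
      exact (hstep i hi hxy hmem).2
  refine ⟨fun i hi => (hdiag i hi).2, hzero.1, fun i hi => ?_⟩
  obtain ⟨hxy, hmem⟩ := hdiag i hi.le
  rw [hxy]
  exact (hstep i hi hxy hmem).1

end IsNonCoboundary

end NonCoboundary

section Jets

variable {R : Type*} [CommRing R] {r : ℕ}

variable (R r) in
def lastPt : Fin (r + 1) → R := fun k => if k = Fin.last r then 1 else 0

theorem eval_lastPt_eq_coeff {P : MvPolynomial (Fin (r + 1)) R} {n : ℕ}
    (hP : P.IsHomogeneous n) : eval (lastPt R r) P = coeff (Finsupp.single (Fin.last r) n) P := by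
  rw [eval_eq', Finset.sum_eq_single (Finsupp.single (Fin.last r) n)]
  · rw [Finset.prod_eq_one, mul_one]
    intro i _
    by_cases hi : i = Fin.last r <;> simp [lastPt, hi]
  · intro b hb hne
    obtain ⟨i, hi, hib⟩ : ∃ i ≠ Fin.last r, b i ≠ 0 := by
      by_contra! h
      have hb' : b = Finsupp.single (Fin.last r) (b (Fin.last r)) :=
        Finsupp.eq_single_iff.mpr ⟨fun i hi => Finset.mem_singleton.mpr
          (by_contra fun hi' => Finsupp.mem_support_iff.mp hi (h i hi')), rfl⟩
      have hdeg := hP (mem_support_iff.mp hb)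
      rw [hb', Finsupp.weight_single, Pi.one_apply, smul_eq_mul, mul_one] at hdeg
      exact hne (hb'.trans (by rw [hdeg]))
    rw [Finset.prod_eq_zero (Finset.mem_univ i), mul_zero]
    simp [lastPt, hi, hib]
  · intro h
    rw [notMem_support_iff.mp h, zero_mul]

/-- `∂_j` for `j ≤ r` and `0` for `j > r`, so that the chain rule `pderivNat_sigmaOmega` needs no
case distinction at `j = r`. -/
noncomputable def pderivNat (r j : ℕ) :
    Derivation R (MvPolynomial (Fin (r + 1)) R) (MvPolynomial (Fin (r + 1)) R) :=
  if h : j < r + 1 then pderiv ⟨j, h⟩ else 0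

theorem pderivNat_last : pderivNat (R := R) r r = pderiv (Fin.last r) :=
  dif_pos r.lt_succ_self

theorem pderivNat_of_lt {j : ℕ} (hj : r < j) : pderivNat (R := R) r j = 0 :=
  dif_neg (by omega)

theorem pderivNat_X (j : ℕ) (i : Fin (r + 1)) :
    pderivNat r j (X i : MvPolynomial (Fin (r + 1)) R) = if j = i.1 then 1 else 0 := by
  unfold pderivNat
  split_ifs with hj hji hji
  · simp [pderiv_X, hji]
  · simp [pderiv_X, Fin.ext_iff, Ne.symm hji]
  · omega
  · rfl

theorem pderivNat_comm (j k : ℕ) (P : MvPolynomial (Fin (r + 1)) R) :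
    pderivNat r j (pderivNat r k P) = pderivNat r k (pderivNat r j P) := by
  unfold pderivNat
  split_ifs <;> simp [pderiv_comm]

theorem isHomogeneous_pderivNat {P : MvPolynomial (Fin (r + 1)) R} {n : ℕ}
    (hP : P.IsHomogeneous n) (j : ℕ) : (pderivNat r j P).IsHomogeneous (n - 1) := by
  unfold pderivNat
  split_ifs
  exacts [hP.pderiv, isHomogeneous_zero _ _ _]

theorem coeff_pderivNat_mem {K : Type*} [CommSemiring K] [Algebra K R] {S : Subalgebra K R}
    {P : MvPolynomial (Fin (r + 1)) R} (hP : ∀ m, coeff m P ∈ S) (j : ℕ)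
    (m : Fin (r + 1) →₀ ℕ) : coeff m (pderivNat r j P) ∈ S := by
  unfold pderivNat
  split_ifs
  exacts [coeff_pderiv_mem hP _ m, by simp]

theorem pderivNat_sigmaOmega (ω : R) (j : ℕ) (P : MvPolynomial (Fin (r + 1)) R) :
    pderivNat r j (sigmaOmega ω P) =
      sigmaOmega ω (pderivNat r j P) + C ω * sigmaOmega ω (pderivNat r (j + 1) P) := by
  induction P using MvPolynomial.induction_on generalizing j with
  | C a => simp [sigmaOmega]
  | add p q hp hq => simp only [map_add, hp, hq]; ring
  | mul_X p i ih =>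
    have hX : ∀ j, pderivNat r j (sigmaOmega ω (X i)) =
        sigmaOmega ω (pderivNat r j (X i)) + C ω * sigmaOmega ω (pderivNat r (j + 1) (X i)) := by
      intro j
      by_cases hi : i.1 = 0
      · simp only [sigmaOmega, aeval_X, hi, if_true, pderivNat_X]
        split_ifs <;> simp_all
      · simp only [sigmaOmega, aeval_X, hi, if_false, map_add, Derivation.leibniz, pderivNat_X]
        split_ifs <;> simp <;> omega
    simp only [map_mul, Derivation.leibniz, smul_eq_mul, ih, hX, map_add]
    ring

variable (R r) in
noncomputable def evalLast : MvPolynomial (Fin (r + 1)) R →ₗ[R] R :=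
  (aeval (lastPt R r)).toLinearMap

variable (R r) in
noncomputable def derivLast (j : ℕ) : MvPolynomial (Fin (r + 1)) R →ₗ[R] R :=
  evalLast R r ∘ₗ (pderivNat r j).toLinearMap

variable (R r) in
noncomputable def derivLast₂ (j k : ℕ) : MvPolynomial (Fin (r + 1)) R →ₗ[R] R :=
  derivLast R r j ∘ₗ (pderivNat r k).toLinearMap

theorem evalLast_apply (P : MvPolynomial (Fin (r + 1)) R) :
    evalLast R r P = eval (lastPt R r) P := by
  simp [evalLast]

theorem derivLast_apply (j : ℕ) (P : MvPolynomial (Fin (r + 1)) R) :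
    derivLast R r j P = evalLast R r (pderivNat r j P) :=
  rfl

theorem derivLast₂_apply (j k : ℕ) (P : MvPolynomial (Fin (r + 1)) R) :
    derivLast₂ R r j k P = derivLast R r j (pderivNat r k P) :=
  rfl

theorem evalLast_mem {K : Type*} [CommSemiring K] [Algebra K R] {S : Subalgebra K R}
    {P : MvPolynomial (Fin (r + 1)) R} (hP : ∀ m, coeff m P ∈ S) : evalLast R r P ∈ S := by
  rw [evalLast_apply]
  refine eval_mem (fun m _ => hP m) fun k => ?_
  unfold lastPt
  split_ifs
  exacts [one_mem S, zero_mem S]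

theorem derivLast_mem {K : Type*} [CommSemiring K] [Algebra K R] {S : Subalgebra K R}
    {P : MvPolynomial (Fin (r + 1)) R} (hP : ∀ m, coeff m P ∈ S) (j : ℕ) :
    derivLast R r j P ∈ S :=
  evalLast_mem (coeff_pderivNat_mem hP j)

theorem derivLast₂_mem {K : Type*} [CommSemiring K] [Algebra K R] {S : Subalgebra K R}
    {P : MvPolynomial (Fin (r + 1)) R} (hP : ∀ m, coeff m P ∈ S) (j k : ℕ) :
    derivLast₂ R r j k P ∈ S :=
  derivLast_mem (coeff_pderivNat_mem hP k) j

theorem derivLast_of_lt {j : ℕ} (hj : r < j) (P : MvPolynomial (Fin (r + 1)) R) :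
    derivLast R r j P = 0 := by
  rw [derivLast_apply, pderivNat_of_lt hj, Derivation.zero_apply, map_zero]

theorem derivLast₂_of_lt {j : ℕ} (hj : r < j) (k : ℕ) (P : MvPolynomial (Fin (r + 1)) R) :
    derivLast₂ R r j k P = 0 :=
  derivLast_of_lt hj _

theorem evalLast_sigmaOmega (ω : R) (P : MvPolynomial (Fin (r + 1)) R) :
    evalLast R r (sigmaOmega ω P) = evalLast R r P := by
  have h : (aeval (lastPt R r)).comp (sigmaOmega ω) = aeval (lastPt R r) := by
    refine algHom_ext fun i => ?_
    simp only [sigmaOmega, AlgHom.comp_apply, aeval_X]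
    split_ifs with hi
    · rw [aeval_X]
    · simp [lastPt, Fin.ext_iff]
      omega
  exact congr($h P)

theorem derivLast_sigmaOmega (ω : R) (j : ℕ) (P : MvPolynomial (Fin (r + 1)) R) :
    derivLast R r j (sigmaOmega ω P) = derivLast R r j P + ω * derivLast R r (j + 1) P := by
  rw [derivLast_apply, pderivNat_sigmaOmega, map_add, C_mul', map_smul, evalLast_sigmaOmega,
    evalLast_sigmaOmega, smul_eq_mul, derivLast_apply, derivLast_apply]

theorem derivLast₂_sigmaOmega (ω : R) (j k : ℕ) (P : MvPolynomial (Fin (r + 1)) R) :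
    derivLast₂ R r j k (sigmaOmega ω P) = derivLast₂ R r j k P +
      ω * (derivLast₂ R r (j + 1) k P + derivLast₂ R r j (k + 1) P +
        ω * derivLast₂ R r (j + 1) (k + 1) P) := by
  simp only [derivLast₂_apply, pderivNat_sigmaOmega, map_add, C_mul', map_smul,
    derivLast_sigmaOmega, smul_eq_mul]
  ring

theorem derivLast_last {P : MvPolynomial (Fin (r + 1)) R} {n : ℕ} (hP : P.IsHomogeneous n) :
    derivLast R r r P = n * evalLast R r P := by
  have h := congr(eval (lastPt R r) $(hP.sum_X_mul_pderiv))
  simp only [map_sum, map_mul, eval_X, lastPt, ite_mul, one_mul, zero_mul,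
    Finset.sum_ite_eq', Finset.mem_univ, if_true, nsmul_eq_mul, map_natCast] at h
  rw [derivLast_apply, pderivNat_last, evalLast_apply, evalLast_apply, h]

theorem derivLast₂_last {P : MvPolynomial (Fin (r + 1)) R} {n : ℕ} (hP : P.IsHomogeneous n)
    (j : ℕ) : derivLast₂ R r j r P = (n - 1 : ℕ) * derivLast R r j P := by
  rw [derivLast₂_apply, derivLast_apply, pderivNat_comm, ← derivLast_apply,
    derivLast_last (isHomogeneous_pderivNat hP j), derivLast_apply]

end Jets

section Compatible

variable {K R : Type*} [CommRing K] [CommRing R] [Algebra K R] {r : ℕ}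

/-- The families are indexed by `ℕ`; only their members `0, …, r` are constrained. -/
structure IsCompatible (A B : Subalgebra K R) (ω : R) (F G : ℕ → MvPolynomial (Fin (r + 1)) R) :
    Prop where
  coeff_mem_left : ∀ i ≤ r, ∀ m, coeff m (F i) ∈ A
  coeff_mem_right : ∀ i ≤ r, ∀ m, coeff m (G i) ∈ B
  sigmaOmega_zero : sigmaOmega ω (F 0) = G 0
  sigmaOmega_succ : ∀ i < r, sigmaOmega ω (F (i + 1)) = G (i + 1) + C ω * G i

namespace IsCompatible

variable {A B : Subalgebra K R} {ω : R} {F G : ℕ → MvPolynomial (Fin (r + 1)) R}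

theorem chain (hAB : IsNonCoboundary A B ω) (hFG : IsCompatible A B ω F G)
    (L : MvPolynomial (Fin (r + 1)) R →ₗ[R] R)
    (hLA : ∀ P : MvPolynomial (Fin (r + 1)) R, (∀ m, coeff m P ∈ A) → L P ∈ A)
    (hLB : ∀ P : MvPolynomial (Fin (r + 1)) R, (∀ m, coeff m P ∈ B) → L P ∈ B)
    {N : ℕ} (hN : N ≤ r) {p : ℕ → R} (hp : ∀ i ≤ N, p i ∈ (⊥ : Subalgebra K R))
    (hL : ∀ i ≤ N, L (sigmaOmega ω (F i)) = L (F i) + ω * p i) :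
    (∀ i ≤ N, L (F i) ∈ (⊥ : Subalgebra K R)) ∧ p 0 = 0 ∧ ∀ i < N, p (i + 1) = L (F i) :=
  hAB.chain (fun i hi => hLA _ (hFG.coeff_mem_left i (hi.trans hN)))
    (fun i hi => hLB _ (hFG.coeff_mem_right i (hi.trans hN))) hp
    (by rw [← hL 0 N.zero_le, hFG.sigmaOmega_zero])
    (fun i hi => by
      rw [← hL (i + 1) hi, hFG.sigmaOmega_succ i (by omega), map_add, C_mul', map_smul,
        smul_eq_mul])

theorem evalLast_eq_zero_of_lt (hAB : IsNonCoboundary A B ω) (hFG : IsCompatible A B ω F G)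
    {i : ℕ} (hi : i < r) : evalLast R r (F i) = 0 :=
  ((hFG.chain hAB (evalLast R r) (fun _ => evalLast_mem) (fun _ => evalLast_mem) le_rfl
    (p := 0) (fun _ _ => zero_mem _)
    (fun i _ => by rw [evalLast_sigmaOmega, Pi.zero_apply, mul_zero, add_zero])).2.2 i hi).symm

theorem derivLast_chain (hAB : IsNonCoboundary A B ω) (hFG : IsCompatible A B ω F G) (j : ℕ)
    (hj : ∀ i ≤ r, derivLast R r (j + 1) (F i) ∈ (⊥ : Subalgebra K R)) :
    (∀ i ≤ r, derivLast R r j (F i) ∈ (⊥ : Subalgebra K R)) ∧ derivLast R r (j + 1) (F 0) = 0 ∧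
      ∀ i < r, derivLast R r (j + 1) (F (i + 1)) = derivLast R r j (F i) :=
  hFG.chain hAB (derivLast R r j) (fun _ hP => derivLast_mem hP j)
    (fun _ hP => derivLast_mem hP j) le_rfl hj (fun _ _ => derivLast_sigmaOmega ω j _)

theorem derivLast_mem_bot (hAB : IsNonCoboundary A B ω) (hFG : IsCompatible A B ω F G)
    (j : ℕ) : ∀ i ≤ r, derivLast R r j (F i) ∈ (⊥ : Subalgebra K R) := by
  by_cases hj : r < j
  · intro i _
    rw [derivLast_of_lt hj]
    exact zero_mem _
  · exact (hFG.derivLast_chain hAB j (derivLast_mem_bot hAB hFG (j + 1))).1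
termination_by r + 1 - j

theorem derivLast_succ_zero (hAB : IsNonCoboundary A B ω) (hFG : IsCompatible A B ω F G)
    (j : ℕ) : derivLast R r (j + 1) (F 0) = 0 :=
  (hFG.derivLast_chain hAB j (hFG.derivLast_mem_bot hAB (j + 1))).2.1

theorem derivLast_succ_succ (hAB : IsNonCoboundary A B ω) (hFG : IsCompatible A B ω F G)
    (j : ℕ) {i : ℕ} (hi : i < r) :
    derivLast R r (j + 1) (F (i + 1)) = derivLast R r j (F i) :=
  (hFG.derivLast_chain hAB j (hFG.derivLast_mem_bot hAB (j + 1))).2.2 i hi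

theorem derivLast_eq_zero_of_lt (hAB : IsNonCoboundary A B ω) (hFG : IsCompatible A B ω F G)
    {i j : ℕ} (hij : i < j) (hi : i ≤ r) : derivLast R r j (F i) = 0 := by
  obtain ⟨j, rfl⟩ := Nat.exists_eq_add_one.mpr (i.zero_le.trans_lt hij)
  induction i generalizing j with
  | zero => exact hFG.derivLast_succ_zero hAB j
  | succ i ih =>
    obtain ⟨j, rfl⟩ := Nat.exists_eq_add_one.mpr (by omega : 0 < j)
    rw [hFG.derivLast_succ_succ hAB _ (by omega)]
    exact ih (by omega) j (by omega)

theorem derivLast_diag (hAB : IsNonCoboundary A B ω) (hFG : IsCompatible A B ω F G)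
    {j : ℕ} (hj : j ≤ r) : derivLast R r j (F j) = derivLast R r 0 (F 0) := by
  induction j with
  | zero => rfl
  | succ j ih => rw [hFG.derivLast_succ_succ hAB j hj, ih (by omega)]

/-- By Euler, `∂_j ∂_r = (d - 1) ∂_j` at `e_r`, and `∂_{j+1} F_i` vanishes at `e_r` for `i ≤ j`:
this makes the error terms of `derivLast₂ j k` constant on `F_0, …, F_j`. -/
theorem derivLast₂_chain (hAB : IsNonCoboundary A B ω) (hFG : IsCompatible A B ω F G) {d : ℕ}
    (hF : ∀ i ≤ r, (F i).IsHomogeneous d) {k : ℕ} (hk : k + 1 = r) {j : ℕ} (hj : j ≤ r)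
    (hmem : ∀ i ≤ j, derivLast₂ R r (j + 1) k (F i) ∈ (⊥ : Subalgebra K R)) :
    (∀ i ≤ j, derivLast₂ R r j k (F i) ∈ (⊥ : Subalgebra K R)) ∧
      derivLast₂ R r (j + 1) k (F 0) + (d - 1 : ℕ) * derivLast R r j (F 0) = 0 ∧
      ∀ i < j, derivLast₂ R r (j + 1) k (F (i + 1)) + (d - 1 : ℕ) * derivLast R r j (F (i + 1)) =
        derivLast₂ R r j k (F i) :=
  hFG.chain hAB (derivLast₂ R r j k) (fun _ hP => derivLast₂_mem hP j k)
    (fun _ hP => derivLast₂_mem hP j k) hj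
    (p := fun i => derivLast₂ R r (j + 1) k (F i) + (d - 1 : ℕ) * derivLast R r j (F i))
    (fun i hi => add_mem (hmem i hi)
      (mul_mem (natCast_mem _ _) (hFG.derivLast_mem_bot hAB j i (hi.trans hj))))
    (fun i hi => by
      rw [derivLast₂_sigmaOmega, hk, derivLast₂_last (hF i (hi.trans hj)),
        derivLast₂_last (hF i (hi.trans hj)),
        hFG.derivLast_eq_zero_of_lt hAB (Nat.lt_succ_of_le hi) (hi.trans hj)]
      ring)

theorem derivLast₂_mem_bot (hAB : IsNonCoboundary A B ω) (hFG : IsCompatible A B ω F G)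
    {d : ℕ} (hF : ∀ i ≤ r, (F i).IsHomogeneous d) {k : ℕ} (hk : k + 1 = r) (j : ℕ) :
    ∀ i ≤ j, derivLast₂ R r j k (F i) ∈ (⊥ : Subalgebra K R) := by
  by_cases hj : r < j
  · intro i _
    rw [derivLast₂_of_lt hj]
    exact zero_mem _
  · exact (hFG.derivLast₂_chain hAB hF hk (not_lt.mp hj) fun i hi =>
      derivLast₂_mem_bot hAB hFG hF hk (j + 1) i (Nat.le_succ_of_le hi)).1
termination_by r + 1 - j

theorem derivLast₂_one_add_eq_zero (hAB : IsNonCoboundary A B ω) (hFG : IsCompatible A B ω F G)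
    {d : ℕ} (hF : ∀ i ≤ r, (F i).IsHomogeneous d) {k : ℕ} (hk : k + 1 = r) :
    derivLast₂ R r 1 k (F 0) + (d - 1 : ℕ) * derivLast R r 0 (F 0) = 0 :=
  (hFG.derivLast₂_chain hAB hF hk r.zero_le fun i hi =>
    hFG.derivLast₂_mem_bot hAB hF hk 1 i (Nat.le_succ_of_le hi)).2.1

theorem derivLast₂_superdiag_sub_succ (hAB : IsNonCoboundary A B ω) (hFG : IsCompatible A B ω F G)
    {d : ℕ} (hF : ∀ i ≤ r, (F i).IsHomogeneous d) {k : ℕ} (hk : k + 1 = r) {j : ℕ} (hj : j < r) :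
    derivLast₂ R r (j + 1) k (F j) - derivLast₂ R r (j + 2) k (F (j + 1)) =
      (d - 1 : ℕ) * derivLast R r 0 (F 0) := by
  have h := (hFG.derivLast₂_chain hAB hF hk hj
    fun i hi => hFG.derivLast₂_mem_bot hAB hF hk (j + 2) i (Nat.le_succ_of_le hi)).2.2 j
    j.lt_succ_self
  rw [hFG.derivLast_diag hAB hj] at h
  linear_combination -h

theorem derivLast₂_one_eq (hAB : IsNonCoboundary A B ω) (hFG : IsCompatible A B ω F G)
    {d : ℕ} (hF : ∀ i ≤ r, (F i).IsHomogeneous d) {k : ℕ} (hk : k + 1 = r) :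
    derivLast₂ R r 1 k (F 0) = r * ((d - 1 : ℕ) * derivLast R r 0 (F 0)) := by
  have h := Finset.sum_range_sub' (fun j => derivLast₂ R r (j + 1) k (F j)) r
  rw [Finset.sum_congr rfl fun j hj =>
      hFG.derivLast₂_superdiag_sub_succ hAB hF hk (Finset.mem_range.mp hj),
    Finset.sum_const, Finset.card_range, nsmul_eq_mul,
    derivLast₂_of_lt r.lt_succ_self, sub_zero] at h
  exact h.symm

end IsCompatible

end Compatible

theorem IsCompatible.evalLast_eq_zero {K R : Type*} [Field K] [CharZero K] [CommRing R]
    [Algebra K R] {r : ℕ} {A B : Subalgebra K R} {ω : R} {F G : ℕ → MvPolynomial (Fin (r + 1)) R}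
    (hAB : IsNonCoboundary A B ω) (hFG : IsCompatible A B ω F G) {d : ℕ}
    (hF : ∀ i ≤ r, (F i).IsHomogeneous d) (hr : 1 ≤ r) (hd : 2 ≤ d) {i : ℕ} (hi : i ≤ r) :
    evalLast R r (F i) = 0 := by
  obtain ⟨k, hk⟩ : ∃ k, k + 1 = r := ⟨r - 1, by omega⟩
  have hψ : (((r + 1) * (d - 1) : ℕ) : R) * derivLast R r 0 (F 0) = 0 := by
    have h := hFG.derivLast₂_one_add_eq_zero hAB hF hk
    rw [hFG.derivLast₂_one_eq hAB hF hk] at h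
    push_cast
    linear_combination h
  have hψ0 := eq_zero_of_natCast_mul_eq_zero K (Nat.mul_ne_zero r.succ_ne_zero (by omega)) hψ
  rcases hi.lt_or_eq with hi | rfl
  · exact hFG.evalLast_eq_zero_of_lt hAB hi
  · refine eq_zero_of_natCast_mul_eq_zero K (n := d) (by omega) ?_
    rw [← derivLast_last (hF i le_rfl), hFG.derivLast_diag hAB le_rfl, hψ0]

end SigmaOmega

open SigmaOmega in
theorem stmt6_general {K R : Type*} [Field K] [CharZero K] [CommRing R] [Algebra K R]
    (r : ℕ) (hr : 1 ≤ r) (ω : R)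
    (A B : Subalgebra K R) (hAB : A ⊓ B = ⊥)
    (hω : ∀ f ∈ A, ∀ c : K, f + c • ω ∈ B → c = 0)
    (d : ℕ) (hd : 2 ≤ d)
    (F G : Fin (r + 1) → MvPolynomial (Fin (r + 1)) R)
    (hFhom : ∀ i, (F i).IsHomogeneous d)
    (hFA : ∀ i, ∀ m : Fin (r + 1) →₀ ℕ, MvPolynomial.coeff m (F i) ∈ A)
    (hGB : ∀ i, ∀ m : Fin (r + 1) →₀ ℕ, MvPolynomial.coeff m (G i) ∈ B)
    (hcomp0 : sigmaOmega ω (F 0) = G 0)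
    (hcomp : ∀ i : Fin (r + 1), 1 ≤ i.1 →
      sigmaOmega ω (F i) = G i + MvPolynomial.C ω *
        G ⟨i.1 - 1, lt_of_le_of_lt (Nat.sub_le _ _) i.isLt⟩) :
    ∀ i : Fin (r + 1),
      MvPolynomial.coeff (Finsupp.single (Fin.last r) d) (F i) = 0 ∧
      MvPolynomial.eval
        (fun k : Fin (r + 1) => if k = Fin.last r then (1 : R) else 0) (F i) = 0 := by
  have hFG : IsCompatible A B ω (fun n => F (Fin.ofNat (r + 1) n))
      (fun n => G (Fin.ofNat (r + 1) n)) :=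
    { coeff_mem_left := fun _ _ => hFA _
      coeff_mem_right := fun _ _ => hGB _
      sigmaOmega_zero := hcomp0
      sigmaOmega_succ := fun i hi => by
        have hnat : ∀ n (hn : n < r + 1), Fin.ofNat (r + 1) n = ⟨n, hn⟩ :=
          fun n hn => Fin.ext (Nat.mod_eq_of_lt hn)
        simp only [hnat (i + 1) (by omega), hnat i (by omega)]
        exact hcomp ⟨i + 1, by omega⟩ i.succ_pos }
  intro i
  have h := hFG.evalLast_eq_zero ⟨hAB, hω⟩ (fun _ _ => hFhom _) hr hd i.is_le
  rw [Fin.ofNat_val_eq_self, evalLast_apply] at h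
  exact ⟨eval_lastPt_eq_coeff (hFhom i) ▸ h, h⟩

theorem stmt6 {K R : Type*} [Field K] [CharZero K] [CommRing R] [Algebra K R]
    (r : ℕ) (hr : 1 ≤ r) (ω : R)
    (A B : Subalgebra K R) (hAB : A ⊓ B = ⊥)
    (hω : ∀ f ∈ A, ∀ c : K, f + c • ω ∈ B → c = 0)
    (d : ℕ) (hd : 2 ≤ d)
    (F G : Fin (r + 1) → MvPolynomial (Fin (r + 1)) R)
    (hFhom : ∀ i, (F i).IsHomogeneous d) (hGhom : ∀ i, (G i).IsHomogeneous d)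
    (hFA : ∀ i, ∀ m : Fin (r + 1) →₀ ℕ, MvPolynomial.coeff m (F i) ∈ A)
    (hGB : ∀ i, ∀ m : Fin (r + 1) →₀ ℕ, MvPolynomial.coeff m (G i) ∈ B)
    (hcomp0 : sigmaOmega ω (F 0) = G 0)
    (hcomp : ∀ i : Fin (r + 1), 1 ≤ i.1 →
      sigmaOmega ω (F i) = G i + MvPolynomial.C ω *
        G ⟨i.1 - 1, lt_of_le_of_lt (Nat.sub_le _ _) i.isLt⟩) :
    ∀ i : Fin (r + 1),
      MvPolynomial.coeff (Finsupp.single (Fin.last r) d) (F i) = 0 ∧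
      MvPolynomial.eval
        (fun k : Fin (r + 1) => if k = Fin.last r then (1 : R) else 0) (F i) = 0 :=
  stmt6_general r hr ω A B hAB hω d hd F G hFhom hFA hGB hcomp0 hcomp
end

section
/- Let M be an additive commutative group, let g : M → M be an additive group endomorphism, let d be an integer, and let (L_j)_{j ∈ ℕ} be a sequence of elements of M satisfying g(L_j) = g(L_0) + d·L_{j−1} for every j ≥ 1. If L_j = L_{j+ℓ} for some integers j ≥ 0 and ℓ ≥ 1, then Σ_{k=j+1}^{j+ℓ} d^k · g^{j+ℓ−k}(L_0) = 0. -/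
/-!
Induction on `n` gives the closed form `gⁿ(L n) = ∑_{k ≤ n} dᵏ • gⁿ⁻ᵏ(L 0)`. Applying `g^(j+ℓ)` to
`L j = L (j + ℓ)` and comparing `gˡ` of the closed form at `j` with the closed form at `j + ℓ`, the
terms `k ≤ j` agree, so the remaining terms `k = j + 1, …, j + ℓ` sum to zero.
-/

open Finset

namespace AddMonoid.End

variable {M : Type*} [AddCommGroup M]

lemma pow_add_apply (g : AddMonoid.End M) (m n : ℕ) (x : M) :
    (g ^ (m + n)) x = (g ^ m) ((g ^ n) x) := by
  rw [pow_add, coe_mul, Function.comp_apply]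

lemma sum_pow_zsmul_pow_apply_succ (g : AddMonoid.End M) (d : ℤ) (x : M) (n : ℕ) :
    ∑ k ∈ range (n + 2), d ^ k • (g ^ (n + 1 - k)) x =
      (g ^ (n + 1)) x + d • ∑ k ∈ range (n + 1), d ^ k • (g ^ (n - k)) x := by
  rw [sum_range_succ', smul_sum]
  simp only [Nat.add_sub_add_right, pow_succ', mul_smul, pow_zero, one_smul, Nat.sub_zero]
  abel

lemma pow_apply_sum_pow_zsmul_pow_apply (g : AddMonoid.End M) (d : ℤ) (x : M) (n ℓ : ℕ) :
    (g ^ ℓ) (∑ k ∈ range (n + 1), d ^ k • (g ^ (n - k)) x) =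
      ∑ k ∈ range (n + 1), d ^ k • (g ^ (n + ℓ - k)) x := by
  rw [map_sum]
  refine sum_congr rfl fun k hk => ?_
  rw [map_zsmul, ← pow_add_apply, Nat.add_comm ℓ, Nat.sub_add_comm (mem_range_succ_iff.1 hk)]

end AddMonoid.End

theorem pow_apply_eq_sum_pow_zsmul_pow_apply_zero {M : Type*} [AddCommGroup M]
    {g : AddMonoid.End M} {d : ℤ} {L : ℕ → M}
    (hL : ∀ j : ℕ, 1 ≤ j → g (L j) = g (L 0) + d • L (j - 1)) (n : ℕ) :
    (g ^ n) (L n) = ∑ k ∈ range (n + 1), d ^ k • (g ^ (n - k)) (L 0) := by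
  induction n with
  | zero => simp
  | succ n ih =>
    simp only [AddMonoid.End.sum_pow_zsmul_pow_apply_succ, ← ih, pow_succ,
      AddMonoid.End.coe_mul, Function.comp_apply, hL (n + 1) n.succ_pos, map_add, map_zsmul,
      Nat.add_sub_cancel]

theorem stmt10_general {M : Type*} [AddCommGroup M] (g : AddMonoid.End M) (d : ℤ)
    (L : ℕ → M) (hL : ∀ j : ℕ, 1 ≤ j → g (L j) = g (L 0) + d • L (j - 1))
    (j ℓ : ℕ) (hper : L j = L (j + ℓ)) :
    ∑ k ∈ Finset.Icc (j + 1) (j + ℓ), d ^ k • (g ^ (j + ℓ - k)) (L 0) = 0 := by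
  set f : ℕ → M := fun k => d ^ k • (g ^ (j + ℓ - k)) (L 0)
  have hsplit : ∑ k ∈ range (j + 1), f k + ∑ k ∈ Icc (j + 1) (j + ℓ), f k =
      ∑ k ∈ range (j + 1), f k :=
    calc ∑ k ∈ range (j + 1), f k + ∑ k ∈ Icc (j + 1) (j + ℓ), f k
        = ∑ k ∈ range (j + ℓ + 1), f k := by
          rw [← Ico_add_one_right_eq_Icc, sum_range_add_sum_Ico f (by omega)]
      _ = (g ^ (j + ℓ)) (L (j + ℓ)) := (pow_apply_eq_sum_pow_zsmul_pow_apply_zero hL _).symm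
      _ = (g ^ ℓ) ((g ^ j) (L j)) := by rw [← hper, add_comm j, AddMonoid.End.pow_add_apply]
      _ = ∑ k ∈ range (j + 1), f k := by
          rw [pow_apply_eq_sum_pow_zsmul_pow_apply_zero hL,
            AddMonoid.End.pow_apply_sum_pow_zsmul_pow_apply]
  exact add_eq_left.1 hsplit

theorem stmt10 {M : Type*} [AddCommGroup M] (g : AddMonoid.End M) (d : ℤ)
    (L : ℕ → M) (hL : ∀ j : ℕ, 1 ≤ j → g (L j) = g (L 0) + d • L (j - 1))
    (j ℓ : ℕ) (hℓ : 1 ≤ ℓ) (hper : L j = L (j + ℓ)) :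
    ∑ k ∈ Finset.Icc (j + 1) (j + ℓ), d ^ k • (g ^ (j + ℓ - k)) (L 0) = 0 :=
  stmt10_general g d L hL j ℓ hper
end
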